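/- arXiv:1801.09380 — 11 statements merged into one kernel-verified Lean document; each statement's English description precedes it below -/
import Mathlib

section
/- A subset X of a Boolean group G is independent if and only if for every non-empty finite subset A of X, the sum of the elements of A is non-zero (which in particular forces 0 ∉ X). -/
open Finset in
private lemma bool_sum_symmDiff {G : Type*} [AddCommGroup G] [DecidableEq G]
    (hB : ∀ x : G, x + x = 0) (S T : Finset G) :
    ∑ a ∈ symmDiff S T, a = ∑ a ∈ S, a + ∑ a ∈ T, a := by
  have h1 : ∑ a ∈ S ∪ T, a + ∑ a ∈ S ∩ T, a = ∑ a ∈ S, a + ∑ a ∈ T, a :=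
    Finset.sum_union_inter
  have h2 : (symmDiff S T) ∪ (S ∩ T) = S ∪ T := symmDiff_sup_inf S T
  have h3 : Disjoint (symmDiff S T) (S ∩ T) := disjoint_symmDiff_inf S T
  have h4 : ∑ a ∈ S ∪ T, a = ∑ a ∈ symmDiff S T, a + ∑ a ∈ S ∩ T, a := by
    rw [← h2, Finset.sum_union h3]
  rw [← h1, h4, add_assoc, hB (∑ a ∈ S ∩ T, a), add_zero]

private lemma bool_mem_closure {G : Type*} [AddCommGroup G] [DecidableEq G]
    (hB : ∀ x : G, x + x = 0) {s : Set G} {x : G} (hx : x ∈ AddSubgroup.closure s) :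
    ∃ S : Finset G, ↑S ⊆ s ∧ ∑ a ∈ S, a = x := by
  induction hx using AddSubgroup.closure_induction with
  | mem a ha => exact ⟨{a}, by simpa using ha, by simp⟩
  | zero => exact ⟨∅, by simp, by simp⟩
  | add a b _ _ iha ihb =>
    obtain ⟨S, hS, hSs⟩ := iha
    obtain ⟨T, hT, hTs⟩ := ihb
    exact ⟨symmDiff S T, by
      intro z hz
      rcases Finset.mem_union.mp (symmDiff_le_sup (a := S) (b := T) hz) with h | h
      · exact hS h
      · exact hT h, by rw [bool_sum_symmDiff hB, hSs, hTs]⟩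
  | neg a _ ih =>
    obtain ⟨S, hS, hSs⟩ := ih
    refine ⟨S, hS, ?_⟩
    rw [hSs]
    exact (neg_eq_of_add_eq_zero_right (hB a)).symm

/-- A subset of a Boolean group is independent iff every non-empty finite
subset has non-zero sum. -/
theorem boolean_independence_iff {G : Type*} [AddCommGroup G]
    (hB : ∀ x : G, x + x = 0) (X : Set G) :
    ((0 : G) ∉ X ∧ ∀ A : Set G, A ⊆ X →
        AddSubgroup.closure A ⊓ AddSubgroup.closure (X \ A) = ⊥) ↔
      (∀ A : Finset G, ↑A ⊆ X → A.Nonempty → ∑ a ∈ A, a ≠ 0) := by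
  classical
  constructor
  · rintro ⟨h0, hind⟩ A hAX ⟨a, ha⟩ hsum
    have haX : a ∈ X := hAX ha
    have h1 : a ∈ AddSubgroup.closure ({a} : Set G) :=
      AddSubgroup.subset_closure rfl
    have hsum' : ∑ b ∈ A.erase a, b = a := by
      have key : a + ∑ b ∈ A.erase a, b = 0 := by
        have h5 := Finset.add_sum_erase A id ha
        simp only [id] at h5
        rw [h5, hsum]
      exact (neg_eq_of_add_eq_zero_right key).symm.trans
        (neg_eq_of_add_eq_zero_right (hB a))
    have hmem : (∑ b ∈ A.erase a, b) ∈ AddSubgroup.closure (X \ {a}) := by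
      apply AddSubgroup.sum_mem
      intro c hc
      apply AddSubgroup.subset_closure
      refine ⟨hAX (Finset.mem_of_mem_erase hc), ?_⟩
      simpa using Finset.ne_of_mem_erase hc
    have h2 : a ∈ AddSubgroup.closure (X \ {a}) := by rw [hsum'] at hmem; exact hmem
    have : a ∈ AddSubgroup.closure ({a} : Set G) ⊓ AddSubgroup.closure (X \ {a}) :=
      ⟨h1, h2⟩
    rw [hind {a} (by simpa using haX)] at this
    simp only [AddSubgroup.mem_bot] at this
    exact h0 (this ▸ haX)
  · intro h
    have h0 : (0 : G) ∉ X := by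
      intro h0
      exact h {0} (by simpa using h0) ⟨0, by simp⟩ (by simp)
    refine ⟨h0, fun A hAX => ?_⟩
    rw [eq_bot_iff]
    rintro x ⟨hx1, hx2⟩
    simp only [AddSubgroup.mem_bot]
    by_contra hx
    obtain ⟨S, hS, hSs⟩ := bool_mem_closure hB hx1
    obtain ⟨T, hT, hTs⟩ := bool_mem_closure hB hx2
    have hdisj : Disjoint S T := by
      rw [Finset.disjoint_left]
      intro z hzS hzT
      exact (hT hzT).2 (hS hzS)
    have hsum : ∑ a ∈ S ∪ T, a = 0 := by
      rw [Finset.sum_union hdisj, hSs, hTs]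
      exact hB x
    have hne : (S ∪ T).Nonempty := by
      rcases Finset.eq_empty_or_nonempty S with h' | h'
      · exact absurd (by simp [h'] at hSs; exact hSs.symm) hx
      · exact h'.mono Finset.subset_union_left
    exact h (S ∪ T) (by
      intro z hz
      rcases Finset.mem_union.mp hz with h' | h'
      · exact hAX (hS h')
      · exact (hT h').1) hne hsum
end

section
/- If G is a topological group in which all countable subgroups are closed, then the closure of every countable subset of G is countable. -/
theorem Set.Countable.subgroupClosure {G : Type*} [Group G] {S : Set G} (hS : S.Countable) :
    (Subgroup.closure S : Set G).Countable := by
  have := hS.to_subtype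
  rw [FreeGroup.closure_eq_range, MonoidHom.coe_range]
  exact Set.countable_range _

theorem closure_countable_of_countable_subgroups_closed_general {G : Type*} [Group G]
    [TopologicalSpace G]
    (h : ∀ H : Subgroup G, (H : Set G).Countable → IsClosed (H : Set G)) :
    ∀ S : Set G, S.Countable → (closure S).Countable := by
  intro S hS
  have hH := hS.subgroupClosure
  exact hH.mono (closure_minimal Subgroup.subset_closure (h _ hH))

/-- If all countable subgroups of a topological group are closed, then the
closure of every countable subset is countable. -/
theorem closure_countable_of_countable_subgroups_closed {G : Type*} [Group G]
    [TopologicalSpace G] [IsTopologicalGroup G] [T2Space G]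
    (h : ∀ H : Subgroup G, (H : Set G).Countable → IsClosed (H : Set G)) :
    ∀ S : Set G, S.Countable → (closure S).Countable :=
  closure_countable_of_countable_subgroups_closed_general h
end

section
/- Let G be a topological group with points g_n ∈ G \ {0} and open neighbourhoods V_n of 0 (n ∈ ℕ, with V_{-1} = G) satisfying: for all n, 0 ∉ g_n + V_n + V_n ⊆ V_{n-1} and V_n ⊆ V_{n-1}. Then for every strictly increasing finite sequence i_1 < i_2 < ... < i_k of natural numbers, (g_{i_1} + V_{i_1}) + (g_{i_2} + V_{i_2}) + ... + (g_{i_k} + V_{i_k}) + V_{i_k} ⊆ g_{i_1} + V_{i_1} + V_{i_1}. -/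
open Pointwise

theorem singleton_add_add_subset_of_lt {G : Type*} [AddMonoid G] {g : ℕ → G} {V : ℕ → Set G}
    (hsub : ∀ n, {g (n + 1)} + V (n + 1) + V (n + 1) ⊆ V n)
    (hmono : ∀ n, V (n + 1) ⊆ V n) {m n : ℕ} (hmn : m < n) :
    {g n} + V n + V n ⊆ V m := by
  obtain ⟨p, rfl⟩ := Nat.exists_eq_add_one_of_ne_zero (Nat.ne_zero_of_lt hmn)
  exact (hsub p).trans (antitone_nat_of_succ_le hmono (Nat.lt_succ_iff.mp hmn))

theorem sum_subset_of_gn_Vn_general {G : Type*} [AddGroup G]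
    (g : ℕ → G) (V : ℕ → Set G)
    (hsub : ∀ n, {g (n + 1)} + V (n + 1) + V (n + 1) ⊆ V n)
    (hmono : ∀ n, V (n + 1) ⊆ V n) :
    ∀ (k : ℕ) (i : Fin (k + 1) → ℕ), StrictMono i →
      (List.ofFn fun j : Fin (k + 1) => {g (i j)} + V (i j)).sum + V (i (Fin.last k)) ⊆
        {g (i 0)} + V (i 0) + V (i 0) := by
  intro k
  induction k with
  | zero => simp [Fin.last]
  | succ k ih =>
    intro i hi
    have tail_subset :
        (List.ofFn fun j : Fin (k + 1) => {g (i j.succ)} + V (i j.succ)).sum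
          + V (i (Fin.last (k + 1))) ⊆ V (i 0) := by
      rw [← Fin.succ_last]
      exact (ih _ (hi.comp Fin.strictMono_succ)).trans
        (singleton_add_add_subset_of_lt hsub hmono (hi Fin.zero_lt_one))
    rw [List.ofFn_succ, List.sum_cons, add_assoc]
    exact Set.add_subset_add_left tail_subset

/-- Given `g n ≠ 0` and open neighbourhoods `V n` of `0` with
`0 ∉ g n + V n + V n ⊆ V (n-1)` and `V n ⊆ V (n-1)` (with `V_{-1} = G`),
for every strictly increasing finite sequence `i₁ < ⋯ < i_k` we have
`(g i₁ + V i₁) + ⋯ + (g i_k + V i_k) + V i_k ⊆ g i₁ + V i₁ + V i₁`. -/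
theorem sum_subset_of_gn_Vn {G : Type*} [AddGroup G] [TopologicalSpace G]
    [IsTopologicalAddGroup G] [T2Space G]
    (g : ℕ → G) (V : ℕ → Set G)
    (hg : ∀ n, g n ≠ 0)
    (hV : ∀ n, IsOpen (V n) ∧ (0 : G) ∈ V n)
    (h0 : ∀ n, (0 : G) ∉ {g n} + V n + V n)
    (hsub : ∀ n, {g (n + 1)} + V (n + 1) + V (n + 1) ⊆ V n)
    (hmono : ∀ n, V (n + 1) ⊆ V n) :
    ∀ (k : ℕ) (i : Fin (k + 1) → ℕ), StrictMono i →
      (List.ofFn fun j : Fin (k + 1) => {g (i j)} + V (i j)).sum + V (i (Fin.last k)) ⊆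
        {g (i 0)} + V (i 0) + V (i 0) :=
  sum_subset_of_gn_Vn_general g V hsub hmono
end

section
/- Every non-discrete Hausdorff topological group G has a sequence {U_n : n ∈ ℕ} of non-empty open subsets of G such that for every strictly increasing finite sequence i_1 < ... < i_k of natural numbers, the identity 0 does not belong to U_{i_1} + U_{i_2} + ... + U_{i_k}. -/
/-!
Shrink open neighbourhoods of `0` recursively: given `V n`, pick `a n ∈ V n` with `a n ≠ 0` (the
group is not discrete) and a smaller open neighbourhood `V (n + 1)` of `0` such that
`a n + V (n + 1) + V (n + 1) ⊆ V n \ {0}`. With `U n = a n + V (n + 1)`, a sum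
`U i₁ + ⋯ + U iₖ` with `i₁ < ⋯ < iₖ` lies in `a i₁ + V (i₁ + 1) + V (i₁ + 1)`, because the
tail sum already lies in `V i₂ ⊆ V (i₁ + 1)`; hence it avoids `0`.
-/

open Pointwise

lemma exists_ne_zero_mem_of_not_discreteTopology {G : Type*} [AddGroup G] [TopologicalSpace G]
    [SeparatelyContinuousAdd G] (hnd : ¬ DiscreteTopology G)
    {V : Set G} (hV : IsOpen V) (h0 : (0 : G) ∈ V) : ∃ a ∈ V, a ≠ 0 := by
  by_contra! h
  have hV0 : V = {0} := Set.Subset.antisymm h (Set.singleton_subset_iff.mpr h0)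
  exact hnd (discreteTopology_iff_isOpen_singleton_zero.mpr (hV0 ▸ hV))

lemma exists_open_nhds_zero_singleton_add_add_subset {G : Type*} [AddMonoid G]
    [TopologicalSpace G] [ContinuousAdd G] {N : Set G} (hN : IsOpen N) {a : G}
    (ha : a ∈ N) : ∃ W : Set G, IsOpen W ∧ (0 : G) ∈ W ∧ {a} + W + W ⊆ N := by
  have hM : (a + ·) ⁻¹' N ∈ nhds (0 : G) :=
    ((continuous_const_add a).isOpen_preimage N hN).mem_nhds (by simpa using ha)
  obtain ⟨W, hWo, hW0, hWW⟩ := exists_open_nhds_zero_add_subset hM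
  refine ⟨W, hWo, hW0, ?_⟩
  calc {a} + W + W = {a} + (W + W) := add_assoc _ _ _
    _ ⊆ {a} + (a + ·) ⁻¹' N := Set.add_subset_add_left hWW
    _ ⊆ N := by
      rw [Set.singleton_add]
      exact Set.image_preimage_subset _ _

lemma exists_antitone_nhds_zero_singleton_add_add_subset_diff_zero {G : Type*} [AddGroup G]
    [TopologicalSpace G] [IsTopologicalAddGroup G] [T1Space G]
    (hnd : ¬ DiscreteTopology G) :
    ∃ (a : ℕ → G) (V : ℕ → Set G), (∀ n, IsOpen (V n) ∧ (0 : G) ∈ V n) ∧ Antitone V ∧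
      ∀ n, {a n} + V (n + 1) + V (n + 1) ⊆ V n \ {0} := by
  have step : ∀ V : {V : Set G // IsOpen V ∧ (0 : G) ∈ V}, ∃ (a : G) (W : Set G),
      (IsOpen W ∧ (0 : G) ∈ W) ∧ W ⊆ V.1 ∧ {a} + W + W ⊆ V.1 \ {0} := by
    rintro ⟨V, hVo, hV0⟩
    obtain ⟨a, haV, ha0⟩ := exists_ne_zero_mem_of_not_discreteTopology hnd hVo hV0
    obtain ⟨W, hWo, hW0, hW⟩ := exists_open_nhds_zero_singleton_add_add_subset
      (hVo.sdiff isClosed_singleton) (show a ∈ V \ {0} from ⟨haV, ha0⟩)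
    refine ⟨a, W ∩ V, ⟨hWo.inter hVo, hW0, hV0⟩, Set.inter_subset_right, ?_⟩
    exact (Set.add_subset_add (Set.add_subset_add_left Set.inter_subset_left)
      Set.inter_subset_left).trans hW
  choose a W hW hWV hsub using step
  let V : ℕ → {V : Set G // IsOpen V ∧ (0 : G) ∈ V} :=
    fun n => (fun V => ⟨W V, hW V⟩)^[n] ⟨Set.univ, isOpen_univ, Set.mem_univ 0⟩
  have hV_succ (n : ℕ) : (V (n + 1)).1 = W (V n) :=
    congrArg Subtype.val (Function.iterate_succ_apply' _ n _)
  refine ⟨fun n => a (V n), fun n => (V n).1, fun n => (V n).2,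
    antitone_nat_of_succ_le fun n => ?_, fun n => ?_⟩
  · change (V (n + 1)).1 ⊆ (V n).1
    exact hV_succ n ▸ hWV (V n)
  · change {a (V n)} + (V (n + 1)).1 + (V (n + 1)).1 ⊆ (V n).1 \ {0}
    rw [hV_succ]
    exact hsub (V n)

lemma sum_ofFn_singleton_add_subset {G : Type*} [AddMonoid G] {a : ℕ → G} {V : ℕ → Set G}
    (h0 : ∀ n, (0 : G) ∈ V n) (hV : Antitone V) (hsub : ∀ n, {a n} + V (n + 1) + V (n + 1) ⊆ V n) :
    ∀ (k : ℕ) (i : Fin (k + 1) → ℕ), StrictMono i →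
      (List.ofFn fun j => {a (i j)} + V (i j + 1)).sum ⊆ {a (i 0)} + V (i 0 + 1) + V (i 0 + 1)
  | 0, i, _ => by
    rw [List.ofFn_succ, List.ofFn_zero, List.sum_singleton]
    exact Set.subset_add_left _ (h0 (i 0 + 1))
  | k + 1, i, hi => by
    have htail := sum_ofFn_singleton_add_subset h0 hV hsub k (fun j => i j.succ)
      (hi.comp Fin.strictMono_succ)
    have hi01 : i 0 + 1 ≤ i 1 := hi Fin.zero_lt_one
    rw [List.ofFn_succ, List.sum_cons]
    exact Set.add_subset_add_left (htail.trans ((hsub _).trans (hV hi01)))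

/-- Every non-discrete Hausdorff topological group has a sequence of non-empty
open sets such that `0` is not in the sum of any finite subfamily indexed by a
strictly increasing sequence. -/
theorem exists_open_sets_zero_not_in_sums {G : Type*} [AddGroup G]
    [TopologicalSpace G] [IsTopologicalAddGroup G] [T2Space G]
    (hnd : ¬ DiscreteTopology G) :
    ∃ U : ℕ → Set G,
      (∀ n, IsOpen (U n) ∧ (U n).Nonempty) ∧
      ∀ (k : ℕ) (i : Fin (k + 1) → ℕ), StrictMono i →
        (0 : G) ∉ (List.ofFn fun j : Fin (k + 1) => U (i j)).sum := by
  obtain ⟨a, V, hV, hanti, hsub⟩ :=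
    exists_antitone_nhds_zero_singleton_add_add_subset_diff_zero hnd
  refine ⟨fun n => {a n} + V (n + 1), fun n => ⟨(hV (n + 1)).1.add_left, ?_⟩, ?_⟩
  · exact ⟨a n + 0, Set.add_mem_add rfl (hV (n + 1)).2⟩
  · intro k i hi h0
    have hsum := sum_ofFn_singleton_add_subset (fun n => (hV n).2) hanti
      (fun n => (hsub n).trans Set.sdiff_subset) k i hi h0
    exact (hsub (i 0) hsum).2 rfl
end

section
/- Let G be a Boolean topological group and {U_n : n ∈ ℕ} a sequence of non-empty open subsets of G such that 0 ∉ U_{i_1} + ... + U_{i_k} for every strictly increasing finite sequence i_1 < ... < i_k. If x_n ∈ U_n for each n, then the set X = {x_n : n ∈ ℕ} is faithfully indexed (the map n ↦ x_n is injective) and X is an independent subset of G. -/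
open Pointwise

lemma mem_listOfFn_sum_sets {G : Type*} [AddCommGroup G] :
    ∀ (m : ℕ) (V : Fin m → Set G) (f : Fin m → G), (∀ j, f j ∈ V j) →
      (∑ j, f j) ∈ (List.ofFn V).sum := by
  intro m
  induction m with
  | zero => intro V f _; simp [List.ofFn_zero]
  | succ m ih =>
      intro V f hf
      rw [List.ofFn_succ, List.sum_cons, Fin.sum_univ_succ]
      exact Set.add_mem_add (hf 0) (ih _ _ fun j => hf j.succ)

lemma sum_symmDiff_boolean {G : Type*} [AddCommGroup G] (hB : ∀ x : G, x + x = 0)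
    (x : ℕ → G) (S T : Finset ℕ) :
    ∑ i ∈ symmDiff S T, x i = (∑ i ∈ S, x i) + ∑ i ∈ T, x i := by
  classical
  have h1 := Finset.sum_inter_add_sum_sdiff S T x
  have h2 := Finset.sum_inter_add_sum_sdiff T S x
  rw [symmDiff_def, Finset.sup_eq_union, Finset.sum_union disjoint_sdiff_sdiff, ← h1, ← h2,
    Finset.inter_comm T S, add_add_add_comm, hB, zero_add]

/-- If `{U n}` are non-empty open sets in a Boolean topological group with
`0 ∉ U i₁ + ⋯ + U i_k` for all strictly increasing `i₁ < ⋯ < i_k`, then any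
selection `x n ∈ U n` is injective and has independent range. -/
theorem selection_injective_and_independent {G : Type*} [AddCommGroup G]
    [TopologicalSpace G] (hB : ∀ x : G, x + x = 0)
    (U : ℕ → Set G) (hU : ∀ n, IsOpen (U n) ∧ (U n).Nonempty)
    (hsum : ∀ (k : ℕ) (i : Fin (k + 1) → ℕ), StrictMono i →
      (0 : G) ∉ (List.ofFn fun j : Fin (k + 1) => U (i j)).sum)
    (x : ℕ → G) (hx : ∀ n, x n ∈ U n) :
    Function.Injective x ∧
      ((0 : G) ∉ Set.range x ∧ ∀ A : Set G, A ⊆ Set.range x →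
        AddSubgroup.closure A ⊓ AddSubgroup.closure (Set.range x \ A) = ⊥) := by
  classical
  -- key: sums over nonempty finite index sets are nonzero
  have key : ∀ S : Finset ℕ, S.Nonempty → (∑ i ∈ S, x i) ≠ 0 := by
    intro S hS h0
    have hcard : S.card = (S.card - 1) + 1 :=
      (Nat.succ_pred_eq_of_pos (Finset.card_pos.mpr hS)).symm
    set k := S.card - 1 with hk
    set i : Fin (k + 1) → ℕ := fun j => S.orderEmbOfFin hcard j with hi
    have hmono : StrictMono i := (S.orderEmbOfFin hcard).strictMono
    apply hsum k i hmono
    have hSim : S = Finset.image i Finset.univ := by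
      apply Finset.coe_injective
      rw [Finset.coe_image, Finset.coe_univ, Set.image_univ]
      exact (Finset.range_orderEmbOfFin S hcard).symm
    have hsumeq : ∑ n ∈ S, x n = ∑ j : Fin (k + 1), x (i j) := by
      rw [hSim, Finset.sum_image (fun a _ b _ h => hmono.injective h)]
    rw [← h0, hsumeq]
    exact mem_listOfFn_sum_sets (k + 1) (fun j => U (i j)) (fun j => x (i j))
      (fun j => hx (i j))
  -- closure description
  have clos : ∀ (I : Set ℕ) (g : G), g ∈ AddSubgroup.closure (x '' I) →
      ∃ S : Finset ℕ, ↑S ⊆ I ∧ g = ∑ n ∈ S, x n := by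
    intro I g hg
    induction hg using AddSubgroup.closure_induction with
    | mem a ha =>
        obtain ⟨n, hn, rfl⟩ := ha
        exact ⟨{n}, by simpa using hn, by simp⟩
    | zero => exact ⟨∅, by simp, by simp⟩
    | add a b _ _ iha ihb =>
        obtain ⟨S, hSI, rfl⟩ := iha
        obtain ⟨T, hTI, rfl⟩ := ihb
        refine ⟨symmDiff S T, ?_, (sum_symmDiff_boolean hB x S T).symm⟩
        intro n hn
        rcases Finset.mem_symmDiff.mp hn with ⟨h, _⟩ | ⟨h, _⟩
        · exact hSI h
        · exact hTI h
    | neg a _ iha =>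
        obtain ⟨S, hSI, rfl⟩ := iha
        exact ⟨S, hSI, neg_eq_of_add_eq_zero_left (hB _) ▸ rfl⟩
  have hinj : Function.Injective x := by
    intro a b hab
    by_contra hne
    apply key {a, b} ⟨a, by simp⟩
    rw [Finset.sum_pair hne, hab]
    exact hB _
  refine ⟨hinj, ?_, ?_⟩
  · rintro ⟨n, hn⟩
    exact key {n} ⟨n, by simp⟩ (by simpa using hn)
  · intro A hA
    set I : Set ℕ := x ⁻¹' A with hI
    have hAim : x '' I = A := by
      rw [hI, Set.image_preimage_eq_inter_range, Set.inter_eq_left.mpr hA]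
    have hAcim : x '' Iᶜ = Set.range x \ A := by
      ext g
      constructor
      · rintro ⟨n, hn, rfl⟩; exact ⟨⟨n, rfl⟩, hn⟩
      · rintro ⟨⟨n, rfl⟩, hg⟩; exact ⟨n, hg, rfl⟩
    rw [eq_bot_iff]
    intro g hg
    rw [AddSubgroup.mem_inf] at hg
    obtain ⟨S, hSI, hgS⟩ := clos I g (by rw [hAim]; exact hg.1)
    obtain ⟨T, hTI, hgT⟩ := clos Iᶜ g (by rw [hAcim]; exact hg.2)
    have hd : Disjoint S T := by
      rw [Finset.disjoint_left]
      intro n hnS hnT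
      exact hTI hnT (hSI hnS)
    have hzero : ∑ n ∈ S ∪ T, x n = 0 := by
      rw [Finset.sum_union hd, ← hgS, ← hgT]; exact hB g
    have hempty : S ∪ T = ∅ := by
      by_contra h
      exact key (S ∪ T) (Finset.nonempty_of_ne_empty h) hzero
    have hS : S = ∅ := Finset.union_eq_empty.mp hempty |>.1
    rw [AddSubgroup.mem_bot, hgS, hS, Finset.sum_empty]
end

section
/- For any abelian group G, every subgroup H of G is closed in G equipped with its Bohr topology. -/
/-- The Bohr topology of an abelian group. -/
noncomputable def bohrTopology (A : Type*) [AddCommGroup A] : TopologicalSpace A :=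
  ⨅ φ : A →+ AddCircle (1 : ℝ), TopologicalSpace.induced φ inferInstance

/-- The natural map from the rational circle to the real circle. -/
noncomputable def ratCircleToRealCircle : AddCircle (1 : ℚ) →+ AddCircle (1 : ℝ) :=
  QuotientAddGroup.map _ _ (Rat.castHom ℝ).toAddMonoidHom (by
    intro x hx
    obtain ⟨n, hn⟩ := hx
    refine ⟨n, ?_⟩
    simp only [zsmul_one] at hn ⊢
    simp [← hn])

lemma ratCircleToRealCircle_eq_zero {x : AddCircle (1 : ℚ)}
    (h : ratCircleToRealCircle x = 0) : x = 0 := by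
  induction x using QuotientAddGroup.induction_on with
  | H q =>
    have : ((q : ℝ) : AddCircle (1 : ℝ)) = 0 := h
    rw [QuotientAddGroup.eq_zero_iff] at this ⊢
    obtain ⟨n, hn⟩ := this
    refine ⟨n, ?_⟩
    simp only [zsmul_one] at hn ⊢
    exact_mod_cast hn

/-- Every subgroup of an abelian group is closed in the Bohr topology. -/
theorem addSubgroup_isClosed_bohr {G : Type*} [AddCommGroup G] (H : AddSubgroup G) :
    @IsClosed G (bohrTopology G) (H : Set G) := by
  letI : TopologicalSpace G := bohrTopology G
  rw [← isOpen_compl_iff]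
  rw [isOpen_iff_forall_mem_open]
  intro g hg
  -- g ∉ H; find a character vanishing on H but not at g
  have hne : (QuotientAddGroup.mk g : G ⧸ H) ≠ 0 := by
    simpa [QuotientAddGroup.eq_zero_iff] using hg
  obtain ⟨c, hc⟩ := CharacterModule.exists_character_apply_ne_zero_of_ne_zero hne
  set φ : G →+ AddCircle (1 : ℝ) :=
    ratCircleToRealCircle.comp ((c : G ⧸ H →+ AddCircle (1 : ℚ)).comp
      (QuotientAddGroup.mk' H))
  refine ⟨φ ⁻¹' {0}ᶜ, ?_, ?_, ?_⟩
  · intro x hx hxH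
    apply hx
    show φ x = 0
    have : (QuotientAddGroup.mk' H) x = 0 := (QuotientAddGroup.eq_zero_iff x).2 hxH
    show ratCircleToRealCircle (c (QuotientAddGroup.mk' H x)) = 0
    simp [this]
  · have hcont : @Continuous G _ (bohrTopology G) _ φ := by
      apply continuous_iInf_dom (i := φ)
      exact continuous_induced_dom
    exact (isClosed_singleton (x := (0 : AddCircle (1 : ℝ)))).preimage hcont |>.isOpen_compl
  · show φ g ≠ 0
    intro h0
    exact hc (ratCircleToRealCircle_eq_zero (by exact h0))
end

section
/- Every independent subset X of an abelian group G is closed and discrete in G equipped with its Bohr topology. -/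
open Submodule


lemma quarter_le_norm_addCircle {x : ℝ} (h1 : 4⁻¹ ≤ x) (h2 : x ≤ 2⁻¹) :
    (4⁻¹ : ℝ) ≤ ‖(x : AddCircle (1 : ℝ))‖ := by
  rw [AddCircle.norm_eq]
  simp only [inv_one, one_mul, mul_one]
  rcases le_or_gt ((round x : ℤ) : ℝ) 0 with h | h
  · exact le_abs.2 (Or.inl (by linarith))
  · have : (1 : ℝ) ≤ (round x : ℝ) := by exact_mod_cast h
    exact le_abs.2 (Or.inr (by linarith))

lemma exists_t {G : Type*} [AddCommGroup G] (c : G) (hc : c ≠ 0) :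
    ∃ t : AddCircle (1 : ℝ), ((addOrderOf c : ℤ)) • t = 0 ∧ (4⁻¹ : ℝ) ≤ ‖t‖ := by
  rcases Nat.eq_zero_or_pos (addOrderOf c) with he | hpos
  · exact ⟨((2⁻¹ : ℝ) : AddCircle (1:ℝ)), by simp [he],
      quarter_le_norm_addCircle (by norm_num) le_rfl⟩
  · set e := addOrderOf c with hee
    have he2 : 2 ≤ e := by
      rcases Nat.lt_or_ge e 2 with h | h
      · have h1 : e = 1 := by omega
        exact absurd (AddMonoid.addOrderOf_eq_one_iff.mp (hee.symm.trans (by rw [h1]))) hc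
      · exact h
    refine ⟨(((e / 2 : ℕ) : ℝ) / (e : ℝ) : ℝ), ?_, ?_⟩
    · have hne : (e : ℝ) ≠ 0 := by positivity
      rw [← AddCircle.coe_zsmul, zsmul_eq_mul, Int.cast_natCast]
      have heq : (e : ℝ) * (((e / 2 : ℕ) : ℝ) / (e : ℝ)) = ((e / 2 : ℕ) : ℝ) := by
        field_simp
      rw [heq]
      exact (AddCircle.coe_eq_zero_iff _).mpr ⟨((e/2 : ℕ) : ℤ), by rw [zsmul_eq_mul, mul_one, Int.cast_natCast]⟩
    · apply quarter_le_norm_addCircle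
      · rw [le_div_iff₀ (by positivity)]
        have h1 : e ≤ 2 * (e / 2) + 1 := by omega
        have : (e : ℝ) ≤ 2 * ((e / 2 : ℕ) : ℝ) + 1 := by exact_mod_cast h1
        nlinarith [show (2:ℝ) ≤ (e:ℝ) by exact_mod_cast he2]
      · rw [div_le_iff₀ (by positivity)]
        have h1 : 2 * (e / 2) ≤ e := by omega
        have : 2 * ((e / 2 : ℕ) : ℝ) ≤ (e : ℝ) := by exact_mod_cast h1
        linarith

lemma exists_cyclic_hom {G : Type*} [AddCommGroup G] (y : G) (t : AddCircle (1 : ℝ))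
    (ht : ((addOrderOf y : ℤ)) • t = 0) :
    ∃ f : (ℤ ∙ y) →ₗ[ℤ] AddCircle (1 : ℝ),
      f ⟨y, Submodule.mem_span_singleton_self y⟩ = t := by
  refine ⟨(Submodule.liftQSpanSingleton ((addOrderOf y : ℤ))
      (LinearMap.toSpanSingleton ℤ _ t) (by simpa using ht)) ∘ₗ
      (CharacterModule.intSpanEquivQuotAddOrderOf y).toLinearMap, ?_⟩
  rw [LinearMap.comp_apply]
  erw [CharacterModule.intSpanEquivQuotAddOrderOf_apply_self]
  erw [Submodule.liftQSpanSingleton_apply]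
  exact LinearMap.toSpanSingleton_apply_one ℤ _ t

/-- extension of linear maps to the circle along submodule inclusions -/
lemma extend_from_submodule {G : Type*} [AddCommGroup G] (p : Submodule ℤ G)
    (f : p →ₗ[ℤ] AddCircle (1 : ℝ)) :
    ∃ φ : G →ₗ[ℤ] AddCircle (1 : ℝ), ∀ v : p, φ v = f v := by
  obtain ⟨φ, hφ⟩ := (Module.Baer.of_divisible _).extension_property p.subtype
    (Submodule.injective_subtype p) f
  exact ⟨φ, fun v => LinearMap.ext_iff.mp hφ v⟩

lemma exists_sep {G : Type*} [AddCommGroup G] (a : G) (ha : a ≠ 0) :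
    ∃ φ : G →ₗ[ℤ] AddCircle (1 : ℝ), φ a ≠ 0 := by
  obtain ⟨t, ht, htn⟩ := exists_t a ha
  obtain ⟨f, hf⟩ := exists_cyclic_hom a t ht
  obtain ⟨φ, hφ⟩ := extend_from_submodule (ℤ ∙ a) f
  refine ⟨φ, ?_⟩
  have := hφ ⟨a, Submodule.mem_span_singleton_self a⟩
  rw [show ((⟨a, Submodule.mem_span_singleton_self a⟩ : (ℤ ∙ a)) : G) = a from rfl] at this
  rw [this, hf]
  intro h
  rw [h, norm_zero] at htn
  norm_num at htn

section Main
variable {G : Type*} [AddCommGroup G]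

lemma exists_main_char (X : Set G) (h0 : (0:G) ∉ X)
    (hspan : ∀ A : Set G, A ⊆ X → span ℤ A ⊓ span ℤ (X \ A) = ⊥) (g : G) :
    ∃ (F : Finset G) (φ : G →ₗ[ℤ] AddCircle (1:ℝ)), ↑F ⊆ X ∧ φ g = 0 ∧
      ∀ x ∈ X, x ∉ F → (4⁻¹ : ℝ) ≤ ‖φ x‖ := by
  classical
  obtain ⟨d, hd⟩ := Int.subgroup_cyclic (AddSubgroup.comap ((zmultiplesHom G) g)
      (span ℤ X).toAddSubgroup)
  have hdg : d • g ∈ span ℤ X := by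
    have h1 : d ∈ AddSubgroup.closure ({d} : Set ℤ) :=
      AddSubgroup.subset_closure (Set.mem_singleton d)
    rw [← hd, AddSubgroup.mem_comap] at h1
    exact h1
  obtain ⟨T, hTX, hdgT⟩ := Submodule.mem_span_finite_of_mem_span hdg
  have KS : ∀ n : ℤ, n • g ∈ span ℤ X → n • g ∈ span ℤ (T : Set G) := by
    intro n hn
    have h1 : n ∈ AddSubgroup.closure ({d} : Set ℤ) := by
      rw [← hd, AddSubgroup.mem_comap]; exact hn
    obtain ⟨m, hm⟩ := AddSubgroup.mem_closure_singleton.mp h1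
    have : n • g = m • (d • g) := by
      rw [← mul_smul, ← hm, smul_eq_mul]
    rw [this]
    exact smul_mem _ m hdgT
  set Y : Set G := X \ ↑T with hYdef
  have key : ∀ (v : G) (S : Set G), v ∈ span ℤ (insert g S) → v ∈ span ℤ X →
      S ⊆ span ℤ X → v ∈ span ℤ ((T : Set G) ∪ S) := by
    intro v S hv hvX hSX
    obtain ⟨n, z, hz, rfl⟩ := Submodule.mem_span_insert.mp hv
    have hzX : z ∈ span ℤ X := span_le.mpr hSX hz
    have hng : n • g ∈ span ℤ X := by
      have h2 := sub_mem hvX hzX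
      rwa [add_sub_cancel_right] at h2
    exact add_mem (span_mono Set.subset_union_left (KS n hng))
      (span_mono Set.subset_union_right hz)
  let p : Option Y → Submodule ℤ G := fun i => match i with
    | none => span ℤ (insert g (T : Set G))
    | some y => span ℤ {(y : G)}
  have hp : iSupIndep p := by
    rw [iSupIndep_def]
    intro i
    rw [Submodule.disjoint_def]
    intro v hvi hvsup
    match i with
    | none =>
      have hb : (⨆ j, ⨆ _ : j ≠ (none : Option Y), p j) ≤ span ℤ Y := by
        apply iSup₂_le
        rintro (_|z) hj
        · exact absurd rfl hj
        · exact span_le.mpr (Set.singleton_subset_iff.mpr (subset_span z.2))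
      have hvY : v ∈ span ℤ Y := hb hvsup
      have hvX : v ∈ span ℤ X := span_mono Set.diff_subset hvY
      have hvT : v ∈ span ℤ ((T : Set G) ∪ (T : Set G)) :=
        key v (T : Set G) hvi hvX (fun a ha => subset_span (hTX ha))
      rw [Set.union_self] at hvT
      have : v ∈ span ℤ (T : Set G) ⊓ span ℤ (X \ (T : Set G)) :=
        Submodule.mem_inf.mpr ⟨hvT, hvY⟩
      rw [hspan (T : Set G) hTX] at this
      simpa using this
    | some y =>
      have hb : (⨆ j, ⨆ _ : j ≠ (some y : Option Y), p j) ≤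
          span ℤ (insert g ((T : Set G) ∪ (Y \ {(y : G)}))) := by
        apply iSup₂_le
        rintro (_|z) hj
        · exact span_mono (Set.insert_subset_insert Set.subset_union_left)
        · refine span_le.mpr (Set.singleton_subset_iff.mpr ?_)
          refine subset_span (Set.subset_insert _ _ (Set.mem_union_right _ ?_))
          exact ⟨z.2, fun hzy => hj (congrArg some (Subtype.ext hzy))⟩
      have hvX : v ∈ span ℤ X :=
        span_le.mpr (Set.singleton_subset_iff.mpr (subset_span y.2.1)) hvi
      have hvU : v ∈ span ℤ ((T : Set G) ∪ ((T : Set G) ∪ (Y \ {(y : G)}))) := by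
        refine key v _ (hb hvsup) hvX ?_
        intro a ha
        rcases ha with ha | ha
        · exact subset_span (hTX ha)
        · exact subset_span ha.1.1
      have hsub : (T : Set G) ∪ ((T : Set G) ∪ (Y \ {(y : G)})) ⊆ X \ {(y : G)} := by
        have hTsub : (T : Set G) ⊆ X \ {(y : G)} := fun a ha =>
          ⟨hTX ha, fun hay => y.2.2 (Set.mem_singleton_iff.mp hay ▸ ha)⟩
        rintro a (ha | ha | ha)
        · exact hTsub ha
        · exact hTsub ha
        · exact ⟨ha.1.1, ha.2⟩
      have : v ∈ span ℤ {(y : G)} ⊓ span ℤ (X \ {(y : G)}) :=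
        Submodule.mem_inf.mpr ⟨hvi, span_le.mpr (fun a ha => subset_span (hsub ha)) hvU⟩
      rw [hspan {(y : G)} (Set.singleton_subset_iff.mpr y.2.1)] at this
      simpa using this
  have hY0 : ∀ y : Y, (y : G) ≠ 0 := fun y hy => h0 (hy ▸ y.2.1)
  choose t ht1 ht2 using fun y : Y => exists_t (y : G) (hY0 y)
  choose fc hfc using fun y : Y => exists_cyclic_hom (y : G) (t y) (ht1 y)
  let f : (i : Option Y) → p i →ₗ[ℤ] AddCircle (1:ℝ) := fun i => match i with
    | none => 0
    | some y => fc y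
  obtain ⟨φ, hφ⟩ := (Module.Baer.of_divisible _).extension_property
    (DFinsupp.lsum ℕ fun i => (p i).subtype) hp.dfinsupp_lsum_injective (DFinsupp.lsum ℕ f)
  refine ⟨T, φ, hTX, ?_, ?_⟩
  · have hgmem : g ∈ p none := subset_span (Set.mem_insert g _)
    have h1 := LinearMap.ext_iff.mp hφ (DFinsupp.single none ⟨g, hgmem⟩)
    simp only [LinearMap.comp_apply, DFinsupp.lsum_single] at h1
    exact h1
  · intro x hx hxT
    have hxY : x ∈ Y := ⟨hx, hxT⟩
    have hmem : x ∈ p (some ⟨x, hxY⟩) := mem_span_singleton_self x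
    have h1 := LinearMap.ext_iff.mp hφ (DFinsupp.single (some ⟨x, hxY⟩) ⟨x, hmem⟩)
    simp only [LinearMap.comp_apply, DFinsupp.lsum_single] at h1
    have h2 : φ x = t ⟨x, hxY⟩ := by
      rw [show (((p (some ⟨x, hxY⟩)).subtype) ⟨x, hmem⟩ : G) = x from rfl] at h1
      rw [h1]
      exact hfc ⟨x, hxY⟩
    rw [h2]
    exact ht2 ⟨x, hxY⟩

end Main

lemma bohr_continuous {G : Type*} [AddCommGroup G] (φ : G →ₗ[ℤ] AddCircle (1:ℝ)) :
    @Continuous G (AddCircle (1:ℝ)) (bohrTopology G) inferInstance φ :=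
  continuous_iInf_dom (i := φ.toAddMonoidHom) continuous_induced_dom

lemma exists_nbhd {G : Type*} [AddCommGroup G] (X : Set G) (h0 : (0:G) ∉ X)
    (hspan : ∀ A : Set G, A ⊆ X → span ℤ A ⊓ span ℤ (X \ A) = ⊥) (g : G) :
    ∃ U : Set G, @IsOpen G (bohrTopology G) U ∧ g ∈ U ∧ U ∩ X ⊆ {g} := by
  classical
  letI : TopologicalSpace G := bohrTopology G
  obtain ⟨F, φ, hFX, hφg, hφ⟩ := exists_main_char X h0 hspan g
  have hsep : ∀ x : G, x ≠ g → ∃ ψ : G →ₗ[ℤ] AddCircle (1:ℝ), ψ x ≠ ψ g := by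
    intro x hx
    obtain ⟨ψ, hψ⟩ := exists_sep (x - g) (sub_ne_zero.mpr hx)
    exact ⟨ψ, fun h => hψ (by rw [map_sub, h, sub_self])⟩
  choose! ψ hψ using hsep
  refine ⟨φ ⁻¹' Metric.ball 0 4⁻¹ ∩
    ⋂ x ∈ F.erase g, (ψ x) ⁻¹' Metric.ball (ψ x g) (dist (ψ x x) (ψ x g)), ?_, ?_, ?_⟩
  · refine IsOpen.inter ((bohr_continuous φ).isOpen_preimage _ Metric.isOpen_ball) ?_
    refine isOpen_biInter_finset fun x _ => ?_
    exact (bohr_continuous (ψ x)).isOpen_preimage _ Metric.isOpen_ball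
  · constructor
    · simp [hφg, Metric.mem_ball]
    · refine Set.mem_iInter₂.mpr fun x hx => ?_
      have hxg : x ≠ g := (Finset.mem_erase.mp hx).1
      have : 0 < dist (ψ x x) (ψ x g) := dist_pos.mpr (hψ x hxg)
      simpa [Metric.mem_ball] using this
  · rintro u ⟨⟨hu1, hu2⟩, huX⟩
    by_cases huF : u ∈ F
    · by_cases hug : u = g
      · exact hug
      · exfalso
        have hmem := Set.mem_iInter₂.mp hu2 u (Finset.mem_erase.mpr ⟨hug, huF⟩)
        rw [Set.mem_preimage, Metric.mem_ball] at hmem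
        exact lt_irrefl _ hmem
    · exfalso
      have := hφ u huX huF
      rw [Set.mem_preimage, Metric.mem_ball, dist_zero_right] at hu1
      linarith

/-- Every independent subset of an abelian group is closed and discrete in the
Bohr topology. -/
theorem independent_closed_discrete_bohr {G : Type*} [AddCommGroup G] (X : Set G)
    (hind : (0 : G) ∉ X ∧ ∀ A : Set G, A ⊆ X →
      AddSubgroup.closure A ⊓ AddSubgroup.closure (X \ A) = ⊥) :
    @IsClosed G (bohrTopology G) X ∧
      ∀ x ∈ X, ∃ U : Set G, @IsOpen G (bohrTopology G) U ∧ U ∩ X = {x} := by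
  classical
  letI : TopologicalSpace G := bohrTopology G
  obtain ⟨h0, hcl⟩ := hind
  have hspan : ∀ A : Set G, A ⊆ X → span ℤ A ⊓ span ℤ (X \ A) = ⊥ := by
    intro A hA
    rw [eq_bot_iff]
    intro v hv
    have h1 : v ∈ AddSubgroup.closure A := by
      rw [← Submodule.span_int_eq_addSubgroupClosure]
      exact (Submodule.mem_inf.mp hv).1
    have h2 : v ∈ AddSubgroup.closure (X \ A) := by
      rw [← Submodule.span_int_eq_addSubgroupClosure]
      exact (Submodule.mem_inf.mp hv).2
    have h3 : v ∈ AddSubgroup.closure A ⊓ AddSubgroup.closure (X \ A) :=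
      AddSubgroup.mem_inf.mpr ⟨h1, h2⟩
    rw [hcl A hA] at h3
    simpa using h3
  constructor
  · rw [← isOpen_compl_iff]
    rw [isOpen_iff_forall_mem_open]
    intro g hg
    obtain ⟨U, hU, hgU, hUX⟩ := exists_nbhd X h0 hspan g
    refine ⟨U, fun u hu hux => ?_, hU, hgU⟩
    have : u = g := hUX ⟨hu, hux⟩
    exact hg (this ▸ hux)
  · intro x hx
    obtain ⟨U, hU, hxU, hUX⟩ := exists_nbhd X h0 hspan x
    refine ⟨U, hU, ?_⟩
    apply Set.Subset.antisymm hUX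
    rintro u rfl
    exact ⟨hxU, hx⟩
end

section
/- Let G be an infinite Boolean Hausdorff topological group such that for every countable subgroup H of G, the subspace topology on H is finer than the Bohr topology of H. Then G is not selectively pseudocompact. -/
/-- A space is selectively pseudocompact if every sequence of non-empty open
sets admits a selection with an accumulation point. -/
def SelectivelyPseudocompact (X : Type*) [TopologicalSpace X] : Prop :=
  ∀ U : ℕ → Set X, (∀ n, IsOpen (U n) ∧ (U n).Nonempty) →
    ∃ x : ℕ → X, (∀ n, x n ∈ U n) ∧
      ∃ p : X, ∀ V ∈ nhds p, {n : ℕ | x n ∈ V}.Infinite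

lemma zmod2_eq_one : ∀ z : ZMod 2, z ≠ 0 → z = 1 := by decide

noncomputable def circHalf : ℤ →+ AddCircle (1 : ℝ) :=
  (QuotientAddGroup.mk' (AddSubgroup.zmultiples (1:ℝ))).comp ((zmultiplesHom ℝ) ((1:ℝ)/2))

lemma circHalf_two : circHalf ((2:ℕ):ℤ) = 0 := by
  show (QuotientAddGroup.mk' (AddSubgroup.zmultiples (1:ℝ))) (((2:ℕ):ℤ) • ((1:ℝ)/2)) = 0
  have : (((2:ℕ):ℤ)) • ((1:ℝ)/2) = 1 := by push_cast; norm_num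
  rw [this, QuotientAddGroup.mk'_apply, QuotientAddGroup.eq_zero_iff]
  exact AddSubgroup.mem_zmultiples 1

noncomputable def iota2 : ZMod 2 →+ AddCircle (1 : ℝ) :=
  ZMod.lift 2 ⟨circHalf, circHalf_two⟩

lemma iota2_one_ne_zero : iota2 1 ≠ 0 := by
  have h1 : iota2 1 = circHalf 1 := by
    have h : ((1:ℤ) : ZMod 2) = 1 := by decide
    rw [← h]
    exact ZMod.lift_coe 2 ⟨circHalf, circHalf_two⟩ 1
  rw [h1]
  intro h0
  have hmem : ((1:ℝ)/2) ∈ AddSubgroup.zmultiples (1:ℝ) := by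
    have : (QuotientAddGroup.mk' (AddSubgroup.zmultiples (1:ℝ))) ((1:ℤ) • ((1:ℝ)/2)) = 0 := h0
    rw [one_zsmul, QuotientAddGroup.mk'_apply, QuotientAddGroup.eq_zero_iff] at this
    exact this
  obtain ⟨k, hk⟩ := AddSubgroup.mem_zmultiples_iff.mp hmem
  rw [zsmul_eq_mul, mul_one] at hk
  have h2 : ((2*k : ℤ) : ℝ) = 1 := by push_cast; rw [hk]; ring
  have h3 : (2*k : ℤ) = 1 := by exact_mod_cast h2
  omega

theorem lemA {G : Type*} [AddCommGroup G] [TopologicalSpace G] [Module (ZMod 2) G]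
    (h : ∀ H : AddSubgroup G, (H : Set G).Countable →
      (inferInstance : TopologicalSpace H) ≤ bohrTopology H)
    (N : Submodule (ZMod 2) G) (hN : ((N : Set G)).Countable)
    (φ : G →ₗ[ZMod 2] ZMod 2) (g₀ : G) (hg₀ : g₀ ∈ N) (hφ : φ g₀ = 0) :
    ∃ V : Set G, IsOpen V ∧ g₀ ∈ V ∧ ∀ g ∈ N, g ∈ V → φ g = 0 := by
  classical
  set M : AddSubgroup G := N.toAddSubgroup with hM
  have hMc : ((M : Set G)).Countable := hN
  have htop := h M hMc
  set χ : M →+ AddCircle (1:ℝ) := (iota2.comp φ.toAddMonoidHom).comp M.subtype with hχ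
  obtain ⟨O₀, O₁, hO₀, hO₁, hm0, hm1, hdisj⟩ := t2_separation (Ne.symm iota2_one_ne_zero)
  have hχb : @Continuous _ _ (bohrTopology ↥M) _ χ := by
    rw [continuous_iff_le_induced]
    exact iInf_le _ χ
  have hSopen : @IsOpen _ (bohrTopology ↥M) (χ ⁻¹' O₀) := by
    exact @Continuous.isOpen_preimage ↥M _ (bohrTopology ↥M) _ χ hχb O₀ hO₀
  have hSopen' : IsOpen (χ ⁻¹' O₀) :=
    @IsOpen.mono ↥M _ (bohrTopology ↥M) (χ ⁻¹' O₀) hSopen htop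
  obtain ⟨V, hVo, hVeq⟩ := isOpen_induced_iff.mp hSopen'
  have hg₀M : g₀ ∈ M := (Submodule.mem_toAddSubgroup N).mpr hg₀
  refine ⟨V, hVo, ?_, ?_⟩
  · have : (⟨g₀, hg₀M⟩ : M) ∈ χ ⁻¹' O₀ := by
      have : χ ⟨g₀, hg₀M⟩ = 0 := by
        simp only [hχ, AddMonoidHom.comp_apply, AddSubgroup.coe_subtype]
        show iota2 (φ g₀) = 0
        rw [hφ, map_zero]
      simpa [Set.mem_preimage, this] using hm0
    rw [← hVeq] at this
    exact this
  · intro g hgN hgV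
    have hgM : g ∈ M := (Submodule.mem_toAddSubgroup N).mpr hgN
    have : (⟨g, hgM⟩ : M) ∈ χ ⁻¹' O₀ := by rw [← hVeq]; exact hgV
    have hval : iota2 (φ g) ∈ O₀ := this
    by_contra hne
    have hone : φ g = 1 := by
      have : ∀ z : ZMod 2, z ≠ 0 → z = 1 := by decide
      exact this _ hne
    rw [hone] at hval
    exact (Set.disjoint_left.mp hdisj hval) hm1


theorem spanCountable {G : Type*} [AddCommGroup G] [Module (ZMod 2) G] {ι : Type*} [Countable ι]
    (v : ι → G) : ((Submodule.span (ZMod 2) (Set.range v) : Submodule (ZMod 2) G) : Set G).Countable := by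
  have hsub : ((Submodule.span (ZMod 2) (Set.range v) : Submodule (ZMod 2) G) : Set G) ⊆
      Set.range (fun c : ι →₀ ZMod 2 => c.sum fun i t => t • v i) := by
    intro x hx
    obtain ⟨c, hc⟩ := Finsupp.mem_span_range_iff_exists_finsupp.mp hx
    exact ⟨c, hc⟩
  exact Set.Countable.mono hsub (Set.countable_range _)

/-- An infinite Boolean Hausdorff topological group in which the subspace
topology on every countable subgroup is finer than its Bohr topology is not
selectively pseudocompact. -/
theorem not_selectivelyPseudocompact_of_bohr {G : Type*} [AddCommGroup G]
    [TopologicalSpace G] [IsTopologicalAddGroup G] [T2Space G] [Infinite G]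
    (hB : ∀ x : G, x + x = 0)
    (h : ∀ H : AddSubgroup G, (H : Set G).Countable →
      (inferInstance : TopologicalSpace H) ≤ bohrTopology H) :
    ¬ SelectivelyPseudocompact G := by
  classical
  intro sp
  letI : Module (ZMod 2) G := AddCommGroup.zmodModule (n := 2)
    (by intro x; rw [two_nsmul]; exact hB x)
  haveI : Fact (Nat.Prime 2) := ⟨Nat.prime_two⟩
  -- infinite basis
  set B := Module.Basis.ofVectorSpace (ZMod 2) G with hBdef
  haveI hι : Infinite ↥(Module.Basis.ofVectorSpaceIndex (ZMod 2) G) := by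
    by_contra hfin
    rw [not_infinite_iff_finite] at hfin
    haveI := hfin
    haveI : Finite (↥(Module.Basis.ofVectorSpaceIndex (ZMod 2) G) →₀ ZMod 2) :=
      Finite.of_injective _ (DFunLike.coe_injective)
    have : Finite G := Finite.of_equiv _ B.repr.toEquiv.symm
    haveI := this
    exact not_finite G
  set f := Infinite.natEmbedding ↥(Module.Basis.ofVectorSpaceIndex (ZMod 2) G) with hfdef
  set a : ℕ → G := fun n => B (f n) with hadef
  have ha : LinearIndependent (ZMod 2) a := B.linearIndependent.comp f f.injective
  set Hs : Submodule (ZMod 2) G := Submodule.span (ZMod 2) (Set.range a) with hHsdef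
  have hHsc : (Hs : Set G).Countable := spanCountable a
  -- Ω
  have hΩex : ∀ n : ℕ, ∃ V : Set G, IsOpen V ∧ (0:G) ∈ V ∧
      ∀ g ∈ Hs, g ∈ V → B.coord (f n) g = 0 :=
    fun n => lemA h Hs hHsc (B.coord (f n)) 0 (zero_mem _) (map_zero _)
  choose Ω hΩo hΩ0 hΩker using hΩex
  -- step
  have step : ∀ O : Set G, IsOpen O → (0:G) ∈ O → ∀ n:ℕ, ∃ V : Set G,
      IsOpen V ∧ (0:G) ∈ V ∧ V ⊆ Ω n ∧ ∀ u ∈ V, ∀ v ∈ V, u + v ∈ O := by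
    intro O hO h0 n
    have hpre : IsOpen ((fun p : G × G => p.1 + p.2) ⁻¹' O) :=
      hO.preimage continuous_add
    obtain ⟨A1, A2, hA1, hA2, m1, m2, hsub⟩ :=
      isOpen_prod_iff.mp hpre 0 0 (by simpa using h0)
    refine ⟨A1 ∩ A2 ∩ Ω n, ((hA1.inter hA2).inter (hΩo n)), ⟨⟨m1, m2⟩, hΩ0 n⟩,
      Set.inter_subset_right, ?_⟩
    intro u hu v hv
    exact hsub (Set.mk_mem_prod hu.1.1 hv.1.2)
  -- W
  let Wrec : ℕ → {V : Set G // IsOpen V ∧ (0:G) ∈ V} := fun n =>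
    Nat.rec ⟨Ω 0, hΩo 0, hΩ0 0⟩
      (fun n prev =>
        ⟨(step prev.1 prev.2.1 prev.2.2 (n+1)).choose,
         (step prev.1 prev.2.1 prev.2.2 (n+1)).choose_spec.1,
         (step prev.1 prev.2.1 prev.2.2 (n+1)).choose_spec.2.1⟩) n
  let W : ℕ → Set G := fun n => (Wrec n).1
  have hWo : ∀ n, IsOpen (W n) := fun n => (Wrec n).2.1
  have hW0 : ∀ n, (0:G) ∈ W n := fun n => (Wrec n).2.2
  have hWΩ : ∀ n, W n ⊆ Ω n := by
    intro n
    cases n with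
    | zero => exact subset_rfl
    | succ n => exact (step (Wrec n).1 (Wrec n).2.1 (Wrec n).2.2 (n+1)).choose_spec.2.2.1
  have hWadd : ∀ n, ∀ u ∈ W (n+1), ∀ v ∈ W (n+1), u + v ∈ W n := fun n =>
    (step (Wrec n).1 (Wrec n).2.1 (Wrec n).2.2 (n+1)).choose_spec.2.2.2
  have hWmono : ∀ n, W (n+1) ⊆ W n := by
    intro n u hu
    have := hWadd n u hu 0 (hW0 (n+1))
    simpa using this
  have hWanti : Antitone W := antitone_nat_of_succ_le hWmono
  -- telescoping
  have tele : ∀ (k : ℕ) (S : Finset ℕ) (w : ℕ → G), S.card = k → S.Nonempty →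
      (∀ i ∈ S, w i ∈ W (i+1)) → ∀ m, (∀ i ∈ S, m ≤ i) → ∑ i ∈ S, w i ∈ W m := by
    intro k
    induction k with
    | zero =>
      intro S w hcard hne
      exact absurd (Finset.card_eq_zero.mp hcard) (Finset.nonempty_iff_ne_empty.mp hne)
    | succ k ih =>
      intro S w hcard hne hw m hm
      set j := S.min' hne with hjdef
      have hjS : j ∈ S := S.min'_mem hne
      have hmj : m ≤ j := hm j hjS
      have hsum : w j + ∑ i ∈ S.erase j, w i = ∑ i ∈ S, w i := Finset.add_sum_erase S w hjS
      by_cases hre : (S.erase j).Nonempty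
      · have hcard' : (S.erase j).card = k := by
          rw [Finset.card_erase_of_mem hjS, hcard]
          omega
        have hge : ∀ i ∈ S.erase j, m + 1 ≤ i := by
          intro i hi
          have h1 := Finset.mem_erase.mp hi
          have h2 := S.min'_le i h1.2
          omega
        have htail : ∑ i ∈ S.erase j, w i ∈ W (m+1) :=
          ih _ w hcard' hre (fun i hi => hw i (Finset.mem_of_mem_erase hi)) (m+1) hge
        have hhead : w j ∈ W (m+1) := hWanti (by omega : m+1 ≤ j+1) (hw j hjS)
        rw [← hsum]
        exact hWadd m _ hhead _ htail
      · have hS1 : S = {j} := by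
          apply Finset.eq_singleton_iff_unique_mem.mpr
          refine ⟨hjS, ?_⟩
          intro i hi
          by_contra hij
          exact hre ⟨i, Finset.mem_erase.mpr ⟨hij, hi⟩⟩
        rw [hS1, Finset.sum_singleton]
        exact hWanti (by omega : m ≤ j+1) (hw j hjS)
  -- U and selection
  let U : ℕ → Set G := fun n => (fun g => a n + g) '' W (n+1)
  have hUo : ∀ n, IsOpen (U n) := by
    intro n
    have : U n = (Homeomorph.addLeft (a n)) '' W (n+1) := rfl
    rw [this, Homeomorph.isOpen_image]
    exact hWo (n+1)
  obtain ⟨x, hx, p, hp⟩ := sp U (fun n => ⟨hUo n, ⟨a n + 0, ⟨0, hW0 (n+1), rfl⟩⟩⟩)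
  let w : ℕ → G := fun n => a n + x n
  have hxw : ∀ n, x n = a n + w n := by
    intro n
    show x n = a n + (a n + x n)
    rw [← add_assoc, hB, zero_add]
  have hw : ∀ n, w n ∈ W (n+1) := by
    intro n
    obtain ⟨v, hv, hveq⟩ := hx n
    have : v = w n := by
      show v = a n + x n
      rw [← hveq, ← add_assoc, hB, zero_add]
    rwa [this] at hv
  -- independence of x
  have hxli : LinearIndependent (ZMod 2) x := by
    rw [linearIndependent_iff]
    intro l hl
    by_contra hlne
    have hne : l.support.Nonempty := Finsupp.support_nonempty_iff.mpr hlne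
    set S := l.support with hSdef
    set m := S.min' hne with hmdef
    have hsum0 : ∑ i ∈ S, x i = 0 := by
      rw [Finsupp.linearCombination_apply, Finsupp.sum] at hl
      rw [← hl]
      apply Finset.sum_congr rfl
      intro i hi
      have h1 : l i ≠ 0 := Finsupp.mem_support_iff.mp hi
      have h2 : l i = 1 := zmod2_eq_one _ h1
      rw [h2, one_smul]
    have hsplit : ∑ i ∈ S, x i = (∑ i ∈ S, a i) + ∑ i ∈ S, w i := by
      rw [← Finset.sum_add_distrib]
      exact Finset.sum_congr rfl (fun i _ => hxw i)
    have haw : ∑ i ∈ S, a i = ∑ i ∈ S, w i := by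
      have h2 : (∑ i ∈ S, a i) + ∑ i ∈ S, w i = 0 := by rw [← hsplit]; exact hsum0
      have hBB : (∑ i ∈ S, w i) + ∑ i ∈ S, w i = 0 := hB _
      exact add_right_cancel (h2.trans hBB.symm)
    have hmem : ∑ i ∈ S, a i ∈ W m := by
      rw [haw]
      exact tele S.card S w rfl hne (fun i _ => hw i) m (fun i hi => S.min'_le i hi)
    have hmemΩ : ∑ i ∈ S, a i ∈ Ω m := hWΩ m hmem
    have hmemH : ∑ i ∈ S, a i ∈ Hs :=
      Submodule.sum_mem _ (fun i _ => Submodule.subset_span ⟨i, rfl⟩)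
    have hker := hΩker m _ hmemH hmemΩ
    have hcoord : B.coord (f m) (∑ i ∈ S, a i) = 1 := by
      rw [map_sum]
      have heach : ∀ i ∈ S, B.coord (f m) (a i) = if i = m then 1 else 0 := by
        intro i _
        show B.coord (f m) (B (f i)) = _
        rw [Module.Basis.coord_apply, Module.Basis.repr_self, Finsupp.single_apply]
        simp [f.injective.eq_iff]
      rw [Finset.sum_congr rfl heach, Finset.sum_ite_eq' S m (fun _ => (1:ZMod 2))]
      simp [show m ∈ S from S.min'_mem hne]
    rw [hker] at hcoord
    exact zero_ne_one hcoord
  -- final contradiction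
  have hxinj : Function.Injective x := hxli.injective
  set s : Set G := Set.range x with hsdef
  have hsli : LinearIndepOn (ZMod 2) id s := (linearIndepOn_id_range_iff hxinj).mpr hxli
  set B' := Module.Basis.extend hsli with hB'def
  set c := B'.repr p with hcdef
  set wgt : ↥(hsli.extend (Set.subset_univ s)) → ZMod 2 :=
    fun b => if c b = 0 then 1 else 0 with hwgtdef
  set ψ : G →ₗ[ZMod 2] ZMod 2 :=
    (Finsupp.linearCombination (ZMod 2) wgt).comp
      (B'.repr : G →ₗ[ZMod 2] _) with hψdef
  have hψp : ψ p = 0 := by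
    show Finsupp.linearCombination (ZMod 2) wgt (B'.repr p) = 0
    rw [Finsupp.linearCombination_apply, Finsupp.sum]
    apply Finset.sum_eq_zero
    intro b hb
    have hbne : (B'.repr p) b ≠ 0 := Finsupp.mem_support_iff.mp hb
    have : wgt b = 0 := by simp only [hwgtdef]; exact if_neg hbne
    rw [this, smul_zero]
  let y : Option ℕ → G := fun o => o.elim p x
  set Ks : Submodule (ZMod 2) G := Submodule.span (ZMod 2) (Set.range y) with hKsdef
  have hKc : (Ks : Set G).Countable := spanCountable y
  have hpK : p ∈ Ks := Submodule.subset_span ⟨none, rfl⟩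
  have hxK : ∀ n, x n ∈ Ks := fun n => Submodule.subset_span ⟨some n, rfl⟩
  obtain ⟨V, hVo, hpV, hVker⟩ := lemA h Ks hKc ψ p hpK hψp
  have hinf := hp V (hVo.mem_nhds hpV)
  have hbmem : ∀ n, x n ∈ hsli.extend (Set.subset_univ s) :=
    fun n => hsli.subset_extend _ ⟨n, rfl⟩
  set bn : ℕ → ↥(hsli.extend (Set.subset_univ s)) := fun n => ⟨x n, hbmem n⟩ with hbndef
  have hbninj : Function.Injective bn := by
    intro i j hij
    exact hxinj (congrArg Subtype.val hij)
  have hψx : ∀ n, ψ (x n) = wgt (bn n) := by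
    intro n
    show Finsupp.linearCombination (ZMod 2) wgt (B'.repr (x n)) = _
    have hxb : x n = B' (bn n) := (Module.Basis.extend_apply_self hsli (bn n)).symm
    rw [hxb, Module.Basis.repr_self, Finsupp.linearCombination_single, one_smul]
  have hEfin : {n : ℕ | c (bn n) ≠ 0}.Finite := by
    have hsubE : {n : ℕ | c (bn n) ≠ 0} ⊆ bn ⁻¹' (c.support : Set _) := by
      intro n hn
      simpa [Finsupp.mem_support_iff] using hn
    exact (Set.Finite.preimage hbninj.injOn c.support.finite_toSet).subset hsubE
  obtain ⟨n, hnmem⟩ := (hinf.diff hEfin).nonempty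
  have hnV : x n ∈ V := hnmem.1
  have hnE : c (bn n) = 0 := not_not.mp hnmem.2
  have h0 : ψ (x n) = 0 := hVker _ (hxK n) hnV
  have h1 : ψ (x n) = 1 := by
    rw [hψx n]
    simp only [hwgtdef, if_pos hnE]
  rw [h0] at h1
  exact zero_ne_one h1
end

section
/- In an abelian group G equipped with its Bohr topology, every subgroup H is h-embedded and the subspace topology on H coincides with the Bohr topology of H. -/
section BohrTopology

variable {A B : Type*} [AddCommGroup A] [AddCommGroup B]

theorem continuous_bohrTopology (ψ : A →+ AddCircle (1 : ℝ)) :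
    @Continuous A (AddCircle (1 : ℝ)) (bohrTopology A) inferInstance ψ :=
  continuous_iff_le_induced.mpr (iInf_le _ ψ)

theorem exists_addCircle_extension {f : A →+ B} (hf : Function.Injective f)
    (φ : A →+ AddCircle (1 : ℝ)) : ∃ ψ : B →+ AddCircle (1 : ℝ), ψ.comp f = φ :=
  (Module.Baer.of_divisible _).extension_property_addMonoidHom f hf φ

theorem induced_bohrTopology_of_injective {f : A →+ B} (hf : Function.Injective f) :
    TopologicalSpace.induced f (bohrTopology B) = bohrTopology A := by
  rw [bohrTopology, bohrTopology, induced_iInf]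
  refine le_antisymm (le_iInf fun φ => ?_) (le_iInf fun ψ => ?_)
  · obtain ⟨ψ, rfl⟩ := exists_addCircle_extension hf φ
    exact (iInf_le _ ψ).trans_eq induced_compose
  · rw [induced_compose]
    exact iInf_le _ (ψ.comp f)

end BohrTopology

/-- In an abelian group with its Bohr topology, every subgroup is h-embedded
and its subspace topology coincides with its own Bohr topology. -/
theorem subgroup_h_embedded_in_bohr {G : Type*} [AddCommGroup G]
    (H : AddSubgroup G) :
    (∀ φ : H →+ AddCircle (1 : ℝ), ∃ ψ : G →+ AddCircle (1 : ℝ),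
      @Continuous G (AddCircle (1 : ℝ)) (bohrTopology G) inferInstance ψ ∧ ∀ x : H, ψ x = φ x) ∧
    TopologicalSpace.induced (Subtype.val : H → G) (bohrTopology G) =
      bohrTopology H := by
  refine ⟨fun φ => ?_, induced_bohrTopology_of_injective (f := H.subtype) Subtype.val_injective⟩
  obtain ⟨ψ, hψ⟩ := exists_addCircle_extension (f := H.subtype) Subtype.val_injective φ
  exact ⟨ψ, continuous_bohrTopology ψ, DFunLike.congr_fun hψ⟩
end

section
/- Let G be an abelian Hausdorff topological group such that the subspace topology on every countable subgroup H of G is finer than the Bohr topology of H. If the Bohr topology of every countable abelian group has no non-trivial convergent sequences, then G has no non-trivial convergent sequences. -/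
open Filter

theorem Set.Countable.addSubgroupClosure {G : Type*} [AddGroup G] {s : Set G}
    (hs : s.Countable) : (AddSubgroup.closure s : Set G).Countable := by
  have := hs.to_subtype
  rw [FreeAddGroup.closure_eq_range, AddMonoidHom.coe_range]
  exact Set.countable_range _

theorem no_nontrivial_convergent_sequences_general {G : Type} [AddCommGroup G]
    [TopologicalSpace G]
    (h : ∀ H : AddSubgroup G, (H : Set G).Countable →
      (inferInstance : TopologicalSpace H) ≤ bohrTopology H)
    (glicksberg : ∀ (H : Type) [AddCommGroup H] [Countable H],
      ∀ u : ℕ → H, Function.Injective u → ∀ x : H,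
        ¬ Tendsto u atTop (@nhds H (bohrTopology H) x)) :
    ∀ u : ℕ → G, Function.Injective u → ∀ x : G, ¬ Tendsto u atTop (nhds x) := by
  intro u hu x hx
  set H := AddSubgroup.closure (insert x (Set.range u))
  have hH : (H : Set G).Countable := ((Set.countable_range u).insert x).addSubgroupClosure
  have : Countable H := hH.to_subtype
  have hxH : x ∈ H := AddSubgroup.subset_closure (Set.mem_insert x _)
  have huH (n : ℕ) : u n ∈ H :=
    AddSubgroup.subset_closure (Set.mem_insert_of_mem x (Set.mem_range_self n))
  have hv : Tendsto (fun n ↦ (⟨u n, huH n⟩ : H)) atTop (nhds ⟨x, hxH⟩) :=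
    tendsto_subtype_rng.2 hx
  exact glicksberg H _ (fun m n hmn ↦ hu (congrArg Subtype.val hmn)) _
    (hv.mono_right (nhds_mono (h H hH)))

/-- If the subspace topology on every countable subgroup of an abelian
topological group `G` is finer than its Bohr topology, and (Glicksberg) the
Bohr topology of every countable abelian group has no non-trivial convergent
sequences, then `G` has no non-trivial convergent sequences. -/
theorem no_nontrivial_convergent_sequences {G : Type} [AddCommGroup G]
    [TopologicalSpace G] [IsTopologicalAddGroup G] [T2Space G]
    (h : ∀ H : AddSubgroup G, (H : Set G).Countable →
      (inferInstance : TopologicalSpace H) ≤ bohrTopology H)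
    (glicksberg : ∀ (H : Type) [AddCommGroup H] [Countable H],
      ∀ u : ℕ → H, Function.Injective u → ∀ x : H,
        ¬ Tendsto u atTop (@nhds H (bohrTopology H) x)) :
    ∀ u : ℕ → G, Function.Injective u → ∀ x : G, ¬ Tendsto u atTop (nhds x) :=
  no_nontrivial_convergent_sequences_general h glicksberg
end

section
/- Let G be a Boolean Hausdorff topological group, X = {x_n : n ∈ ℕ} an injectively indexed independent subset of G, and suppose for every countable subgroup H of G the subspace topology on H is finer than the Bohr topology of H. Then the sequence (x_n) has no accumulation point in G. -/
/-- In a Boolean Hausdorff topological group whose countable subgroups carry a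
subspace topology finer than their Bohr topology, an injectively indexed
independent sequence has no accumulation point. -/
theorem independent_sequence_no_accumulation {G : Type*} [AddCommGroup G]
    [TopologicalSpace G] [IsTopologicalAddGroup G] [T2Space G]
    (hB : ∀ x : G, x + x = 0)
    (x : ℕ → G) (hinj : Function.Injective x)
    (hind : (0 : G) ∉ Set.range x ∧ ∀ A : Set G, A ⊆ Set.range x →
      AddSubgroup.closure A ⊓ AddSubgroup.closure (Set.range x \ A) = ⊥)
    (h : ∀ H : AddSubgroup G, (H : Set G).Countable →
      (inferInstance : TopologicalSpace H) ≤ bohrTopology H) :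
    ∀ g : G, ¬ (∀ V ∈ nhds g, {n : ℕ | x n ∈ V}.Infinite) := by
  classical
  letI : Module (ZMod 2) G := AddCommGroup.zmodModule (n := 2)
    (fun y => by rw [two_nsmul]; exact hB y)
  have hz2 : ∀ c : ZMod 2, c = 0 ∨ c = 1 := by decide
  -- linear independence of the family `x` over `ZMod 2`
  have hli : LinearIndependent (ZMod 2) x := by
    rw [linearIndependent_iff']
    intro s f hsum i his
    by_contra hne
    have hfi : f i = 1 := (hz2 (f i)).resolve_left hne
    have h1 : x i ∈ AddSubgroup.closure {x i} :=
      AddSubgroup.subset_closure (Set.mem_singleton _)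
    have h2 : x i ∈ AddSubgroup.closure (Set.range x \ {x i}) := by
      have hxi : x i = -∑ j ∈ s.erase i, f j • x j := by
        have h := Finset.add_sum_erase s (fun j => f j • x j) his
        simp only [hfi, one_smul] at h
        rw [eq_neg_iff_add_eq_zero, h, hsum]
      have hmem2 : (-∑ j ∈ s.erase i, f j • x j) ∈
          AddSubgroup.closure (Set.range x \ {x i}) := by
        refine neg_mem (AddSubgroup.sum_mem _ (fun j hj => ?_))
        rcases hz2 (f j) with h0 | h1'
        · rw [h0, zero_smul]; exact zero_mem _
        · rw [h1', one_smul]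
          refine AddSubgroup.subset_closure ⟨⟨j, rfl⟩, fun hh => ?_⟩
          exact (Finset.mem_erase.mp hj).1 (hinj hh)
      rwa [← hxi] at hmem2
    have hmem : x i ∈ AddSubgroup.closure {x i} ⊓
        AddSubgroup.closure (Set.range x \ {x i}) := ⟨h1, h2⟩
    rw [hind.2 {x i} (Set.singleton_subset_iff.mpr ⟨i, rfl⟩)] at hmem
    exact hind.1 ⟨i, (AddSubgroup.mem_bot.mp hmem)⟩
  intro g hacc
  -- construct a linear functional separating `g` from cofinitely many `x n`
  obtain ⟨Φ, S, hΦ⟩ : ∃ (Φ : G →ₗ[ZMod 2] ZMod 2) (S : Finset ℕ),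
      ∀ n ∉ S, Φ (x n) ≠ Φ g := by
    by_cases hg : g ∈ Submodule.span (ZMod 2) (Set.range x)
    · obtain ⟨c, hc⟩ := Finsupp.mem_span_range_iff_exists_finsupp.mp hg
      set s : Set G := Set.range x with hs
      have hsub : LinearIndepOn (ZMod 2) id s := (linearIndepOn_id_range_iff hinj).mpr hli
      let B := Module.Basis.extend hsub
      let vA : G → ZMod 2 := fun z => if z ∈ x '' (↑c.support : Set ℕ) then 0 else 1
      let Φ : G →ₗ[ZMod 2] ZMod 2 := B.constr ℕ (fun i => vA ↑i)
      have key : ∀ z (hz : z ∈ hsub.extend (Set.subset_univ s)), Φ z = vA z := by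
        intro z hz
        have : Φ (B ⟨z, hz⟩) = vA ↑(⟨z, hz⟩ : hsub.extend (Set.subset_univ s)) :=
          B.constr_basis ℕ _ _
        rwa [Module.Basis.extend_apply_self] at this
      have hxmem : ∀ n, x n ∈ hsub.extend (Set.subset_univ s) :=
        fun n => hsub.subset_extend _ ⟨n, rfl⟩
      have hΦx : ∀ n, Φ (x n) = vA (x n) := fun n => key _ (hxmem n)
      have hΦg : Φ g = 0 := by
        rw [← hc, map_finsuppSum]
        refine Finset.sum_eq_zero (fun i hi => ?_)
        show Φ (c i • x i) = 0
        rw [map_smul, hΦx i, show vA (x i) = 0 by simp only [vA]; exact if_pos ⟨i, hi, rfl⟩,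
          smul_zero]
      refine ⟨Φ, c.support, fun n hn => ?_⟩
      rw [hΦg, hΦx n]
      have : vA (x n) = 1 := by
        simp only [vA]
        refine if_neg ?_
        rintro ⟨m, hm, hmn⟩
        exact hn (hinj hmn ▸ hm)
      rw [this]; exact one_ne_zero
    · set s : Set G := insert g (Set.range x) with hs
      have hsub : LinearIndepOn (ZMod 2) id s :=
        ((linearIndepOn_id_range_iff hinj).mpr hli).id_insert hg
      let B := Module.Basis.extend hsub
      let vA : G → ZMod 2 := fun z => if z = g then 1 else 0
      let Φ : G →ₗ[ZMod 2] ZMod 2 := B.constr ℕ (fun i => vA ↑i)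
      have key : ∀ z (hz : z ∈ hsub.extend (Set.subset_univ s)), Φ z = vA z := by
        intro z hz
        have : Φ (B ⟨z, hz⟩) = vA ↑(⟨z, hz⟩ : hsub.extend (Set.subset_univ s)) :=
          B.constr_basis ℕ _ _
        rwa [Module.Basis.extend_apply_self] at this
      have hΦg : Φ g = 1 := by
        rw [key g (hsub.subset_extend _ (Set.mem_insert _ _))]
        simp only [vA, if_pos rfl]
      refine ⟨Φ, ∅, fun n _ => ?_⟩
      rw [hΦg, key (x n) (hsub.subset_extend _ (Set.mem_insert_of_mem _ ⟨n, rfl⟩))]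
      have hne : x n ≠ g := fun h' => hg (h' ▸ Submodule.subset_span ⟨n, rfl⟩)
      simp only [vA]
      rw [if_neg hne]
      exact zero_ne_one
  -- the character `ψ` of `ZMod 2` into the circle
  set half : AddCircle (1:ℝ) := ((1/2:ℝ) : AddCircle (1:ℝ)) with hhalf
  have h2 : (zmultiplesHom (AddCircle (1:ℝ)) half) (2:ℤ) = 0 := by
    show (2:ℤ) • half = 0
    rw [hhalf, ← AddCircle.coe_zsmul]
    norm_num
  set ψ : ZMod 2 →+ AddCircle (1:ℝ) := ZMod.lift 2 ⟨_, h2⟩ with hψ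
  have hψ1 : ψ (1 : ZMod 2) = half := by
    rw [hψ, show (1 : ZMod 2) = ((1:ℤ) : ZMod 2) by norm_cast, ZMod.lift_coe]
    exact one_zsmul half
  have hψne : ∀ a b : ZMod 2, a ≠ b → ψ a = ψ b + half := by
    intro a b hab
    have hab1 : a = b + 1 := by revert hab; revert a b; decide
    rw [hab1, map_add, hψ1]
  have hhalf0 : half ≠ 0 := by
    rw [hhalf, Ne, AddCircle.coe_eq_zero_iff]
    rintro ⟨n, hn⟩
    simp only [zsmul_eq_mul, mul_one] at hn
    have h2' : ((2*n : ℤ) : ℝ) = 1 := by push_cast; linarith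
    have h3 : (2*n : ℤ) = 1 := by exact_mod_cast h2'
    omega
  -- the countable subgroup
  let v' : Option ℕ → G := fun o => o.elim g x
  let H : AddSubgroup G := (Submodule.span (ZMod 2) (Set.range v')).toAddSubgroup
  have hgH : g ∈ H := Submodule.subset_span ⟨none, rfl⟩
  have hxH : ∀ n, x n ∈ H := fun n => Submodule.subset_span ⟨some n, rfl⟩
  have hcount : (H : Set G).Countable := by
    rw [← Set.countable_coe_iff]
    exact inferInstanceAs (Countable (Submodule.span (ZMod 2) (Set.range v')))
  -- the character of H
  let φ : H →+ AddCircle (1:ℝ) := (ψ.comp Φ.toAddMonoidHom).comp H.subtype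
  let U : Set (AddCircle (1:ℝ)) := {ψ (Φ g) + half}ᶜ
  have hUopen : IsOpen U := isOpen_compl_singleton
  have hb : bohrTopology H ≤ TopologicalSpace.induced φ inferInstance :=
    iInf_le _ φ
  have hle : (inferInstance : TopologicalSpace H) ≤
      TopologicalSpace.induced φ inferInstance := le_trans (h H hcount) hb
  have hopen' : @IsOpen _ (TopologicalSpace.induced φ inferInstance) (φ ⁻¹' U) :=
    ⟨U, hUopen, rfl⟩
  have hopen : IsOpen (φ ⁻¹' U) := hopen'.mono hle
  obtain ⟨V, hV, hVeq⟩ := isOpen_induced_iff.mp hopen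
  have hgU : ψ (Φ g) ∈ U := by
    intro hmem
    rw [Set.mem_singleton_iff, left_eq_add] at hmem
    exact hhalf0 hmem
  have hgV : g ∈ V := by
    have : (⟨g, hgH⟩ : H) ∈ φ ⁻¹' U := hgU
    rw [← hVeq] at this
    exact this
  have hfin : {n : ℕ | x n ∈ V} ⊆ ↑S := by
    intro n hn
    by_contra hnS
    have hmem : (⟨x n, hxH n⟩ : H) ∈ Subtype.val ⁻¹' V := hn
    rw [hVeq] at hmem
    have : ψ (Φ (x n)) ∈ U := hmem
    exact this (hψne _ _ (hΦ n hnS))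
  exact (Set.Finite.subset S.finite_toSet hfin).not_infinite
    (hacc V (hV.mem_nhds hgV))
end
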